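/- Under the homogeneous Dawid–Skene model with constant assignment probability q and weighted majority voting with weights v: setting t = (q/((L−1)·‖v‖₂))·Σ_{i=1}^M v_i·(L·w_i − 1), c = ‖v‖_∞/‖v‖₂ and σ² = q, (1) if t ≥ 0 then E[E_N] ≤ (L−1)·min{ exp(−t²/2), exp(−t²/(2·(σ² + c·t/3))) }; (2) if t ≤ 0 then E[E_N] ≥ 1 − min{ exp(−t²/2), exp(−t²/(2·(σ² − c·t/3))) }. -/

import Mathlib

open MeasureTheory ProbabilityTheory Real

noncomputable section

namespace CrowdHom

/-- Conditional law of `Z i j ∈ Fin (L+1)` (`0` = missing) given the true label `y j = k`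
under the homogeneous Dawid–Skene model with constant assignment probability `q` and
worker accuracies `w`. -/
def condLaw {M L : ℕ} (q : ℝ) (w : Fin M → ℝ) (i : Fin M) (k : Fin L)
    (h : Fin (L + 1)) : ℝ :=
  if hz : h = 0 then 1 - q
  else q * (if h.pred hz = k then w i else (1 - w i) / ((L : ℝ) - 1))

/-- The quantity `t` of weighted majority voting under the homogeneous model. -/
def tWMV {M : ℕ} (L : ℕ) (q : ℝ) (w v : Fin M → ℝ) : ℝ :=
  q / (((L : ℝ) - 1) * Real.sqrt (∑ i, v i ^ 2)) * ∑ i, v i * ((L : ℝ) * w i - 1)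

/-- `c = ‖v‖_∞ / ‖v‖₂`. -/
def cConst {M : ℕ} (v : Fin M → ℝ) : ℝ :=
  (sSup {x : ℝ | ∃ i : Fin M, x = |v i|}) / Real.sqrt (∑ i, v i ^ 2)

end CrowdHom

/-! Given the true label `k`, an item is misclassified only if the weighted vote for some `h ≠ k`
reaches the vote for `k`, and classified correctly only if the vote for `k` reaches that of a
fixed `h ≠ k`. Either event says that a sum of independent worker contributions
`v i * voteGap h k (Z i)` is nonnegative; the contributions are bounded by `|v i|`, have second
moment at most `q * v i ^ 2` (a worker labels the item with probability `q`), and their means add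
up to `∓ t ‖v‖₂`. The Chernoff bound, combined with Hoeffding's lemma or with Bernstein's bound
`exp s ≤ 1 + s + s² / (2 (1 - |s| / 3))`, gives the two exponentials, and the union bound over
the `L - 1` wrong labels gives the factor `L - 1`. -/

open Finset
open scoped Nat

theorem Nat.two_mul_three_pow_le_factorial (n : ℕ) : 2 * 3 ^ n ≤ (n + 2)! := by
  induction n with
  | zero => simp
  | succ n ih =>
    rw [Nat.factorial_succ, pow_succ]
    nlinarith

theorem Real.exp_le_one_add_add_sq_div {s u : ℝ} (hs : |s| ≤ u) (hu : u < 3) :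
    exp s ≤ 1 + s + s ^ 2 / (2 * (1 - u / 3)) := by
  have hu0 : 0 ≤ u := (abs_nonneg s).trans hs
  have htail : HasSum (fun n : ℕ => s ^ (n + 2) / (n + 2)!) (exp s - 1 - s) := by
    have := (hasSum_nat_add_iff' 2).2 (NormedSpace.expSeries_div_hasSum_exp s)
    simpa [Real.exp_eq_exp_ℝ, Finset.sum_range_succ, sub_sub] using this
  have hgeom : HasSum (fun n : ℕ => s ^ 2 / 2 * (u / 3) ^ n) (s ^ 2 / 2 * (1 - u / 3)⁻¹) :=
    (hasSum_geometric_of_lt_one (by positivity) (by linarith)).mul_left _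
  have hterm (n : ℕ) : s ^ (n + 2) / (n + 2)! ≤ s ^ 2 / 2 * (u / 3) ^ n := by
    have hfact : (2 * 3 ^ n : ℝ) ≤ (n + 2)! := by
      exact_mod_cast Nat.two_mul_three_pow_le_factorial n
    calc s ^ (n + 2) / (n + 2)! ≤ s ^ 2 * u ^ n / (2 * 3 ^ n) := by
          gcongr
          calc s ^ (n + 2) ≤ |s| ^ (n + 2) := (le_abs_self _).trans (abs_pow s _).le
            _ = s ^ 2 * |s| ^ n := by rw [pow_add, sq_abs, mul_comm]
            _ ≤ s ^ 2 * u ^ n := by gcongr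
      _ = s ^ 2 / 2 * (u / 3) ^ n := by rw [div_pow]; ring
  have := hasSum_le hterm htail hgeom
  rw [← div_eq_mul_inv, div_div] at this
  linarith

section FiniteMGF

variable {α : Type*} [Fintype α] {p : α → ℝ}

theorem sum_mul_exp_le_exp_of_mem_Icc (hp : ∀ z, 0 ≤ p z) (hp1 : ∑ z, p z = 1) {g : α → ℝ}
    {a b : ℝ} (hg : ∀ z, g z ∈ Set.Icc a b) (s : ℝ) :
    ∑ z, p z * exp (s * g z) ≤ exp (s * ∑ z, p z * g z + ((b - a) / 2) ^ 2 * s ^ 2 / 2) := by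
  let _ : MeasurableSpace α := ⊤
  let P : PMF α := PMF.ofFintype (fun z => ENNReal.ofReal (p z)) (by
    rw [← ENNReal.ofReal_sum_of_nonneg fun z _ => hp z, hp1, ENNReal.ofReal_one])
  have hint (f : α → ℝ) : ∫ z, f z ∂P.toMeasure = ∑ z, p z * f z := by
    simp [PMF.integral_eq_sum, P, ENNReal.toReal_ofReal (hp _)]
  have hoeff := (hasSubgaussianMGF_of_mem_Icc Measurable.of_discrete.aemeasurable
    (ae_of_all P.toMeasure hg)).mgf_le s
  rw [mgf, hint, hint] at hoeff
  set m := ∑ z, p z * g z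
  have hshift : ∑ z, p z * exp (s * (g z - m)) = exp (-(s * m)) * ∑ z, p z * exp (s * g z) := by
    rw [mul_sum]
    refine sum_congr rfl fun z _ => ?_
    rw [mul_sub, sub_eq_add_neg, exp_add]
    ring
  have hparam : (((‖b - a‖₊ / 2) ^ 2 : NNReal) : ℝ) = ((b - a) / 2) ^ 2 := by
    simp [div_pow, sq_abs]
  rw [hshift, hparam] at hoeff
  calc ∑ z, p z * exp (s * g z) = exp (s * m) * (exp (-(s * m)) * ∑ z, p z * exp (s * g z)) := by
        rw [← mul_assoc, ← exp_add, add_neg_cancel, exp_zero, one_mul]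
    _ ≤ exp (s * m) * exp (((b - a) / 2) ^ 2 * s ^ 2 / 2) := by gcongr
    _ = _ := (exp_add _ _).symm

theorem sum_mul_exp_le_exp_of_abs_le (hp : ∀ z, 0 ≤ p z) (hp1 : ∑ z, p z = 1) {g : α → ℝ}
    {s u : ℝ} (hg : ∀ z, |s * g z| ≤ u) (hu : u < 3) :
    ∑ z, p z * exp (s * g z)
      ≤ exp (s * ∑ z, p z * g z + s ^ 2 * (∑ z, p z * g z ^ 2) / (2 * (1 - u / 3))) := by
  calc ∑ z, p z * exp (s * g z)
      ≤ ∑ z, p z * (1 + s * g z + (s * g z) ^ 2 / (2 * (1 - u / 3))) :=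
        sum_le_sum fun z _ => mul_le_mul_of_nonneg_left
          (Real.exp_le_one_add_add_sq_div (hg z) hu) (hp z)
    _ = ∑ z, p z + (s * ∑ z, p z * g z + s ^ 2 * (∑ z, p z * g z ^ 2) / (2 * (1 - u / 3))) := by
        rw [mul_sum, mul_sum, sum_div, ← sum_add_distrib, ← sum_add_distrib]
        exact sum_congr rfl fun z _ => by ring
    _ ≤ _ := by rw [hp1]; linarith [add_one_le_exp (s * ∑ z, p z * g z
          + s ^ 2 * (∑ z, p z * g z ^ 2) / (2 * (1 - u / 3)))]

end FiniteMGF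

theorem sqrt_sum_sq_pos {ι : Type*} [Fintype ι] {v : ι → ℝ} (hv : v ≠ 0) :
    0 < Real.sqrt (∑ i, v i ^ 2) := by
  obtain ⟨i, hi⟩ := Function.ne_iff.1 hv
  exact Real.sqrt_pos.2 <| (pow_pos (abs_pos.2 hi) 2).trans_le <|
    (sq_abs (v i)).le.trans (single_le_sum (fun j _ => sq_nonneg (v j)) (mem_univ i))

section ProductTail

variable {ι α : Type*} [Fintype ι] [DecidableEq ι] [Fintype α] {p : ι → α → ℝ}

/-- The probability that `∑ i, f i (A i) ≥ 0` when the coordinates `A i` are independent with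
laws `p i`. -/
def productTail (p : ι → α → ℝ) (f : ι → α → ℝ) : ℝ :=
  ∑ A ∈ univ.filter (fun A : ι → α => 0 ≤ ∑ i, f i (A i)), ∏ i, p i (A i)

theorem productTail_le_prod_sum_exp (hp : ∀ i z, 0 ≤ p i z) (f : ι → α → ℝ) {t : ℝ}
    (ht : 0 ≤ t) : productTail p f ≤ ∏ i, ∑ z, p i z * exp (t * f i z) := by
  unfold productTail
  rw [prod_univ_sum, Fintype.piFinset_univ]
  calc _
      ≤ ∑ A ∈ univ.filter (fun A : ι → α => 0 ≤ ∑ i, f i (A i)),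
          ∏ i, p i (A i) * exp (t * f i (A i)) := by
        refine sum_le_sum fun A hA => ?_
        rw [prod_mul_distrib, ← exp_sum, ← mul_sum]
        exact le_mul_of_one_le_right (prod_nonneg fun i _ => hp i (A i))
          (one_le_exp (mul_nonneg ht (mem_filter.1 hA).2))
    _ ≤ ∑ A : ι → α, ∏ i, p i (A i) * exp (t * f i (A i)) := by
        apply sum_le_sum_of_subset_of_nonneg (filter_subset _ _)
        intro A _ _
        exact prod_nonneg fun i _ => mul_nonneg (hp i (A i)) (exp_pos _).le

theorem productTail_le_exp_sum (hp : ∀ i z, 0 ≤ p i z) (f : ι → α → ℝ) {t : ℝ} (ht : 0 ≤ t)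
    (e : ι → ℝ) (he : ∀ i, ∑ z, p i z * exp (t * f i z) ≤ exp (e i)) :
    productTail p f ≤ exp (∑ i, e i) := by
  refine (productTail_le_prod_sum_exp hp f ht).trans ?_
  rw [exp_sum]
  exact prod_le_prod (fun i _ => sum_nonneg fun z _ => mul_nonneg (hp i z) (exp_pos _).le)
    fun i _ => he i

variable {g : α → ℝ} {v : ι → ℝ} {τ : ℝ}

theorem productTail_le_hoeffding (hp : ∀ i z, 0 ≤ p i z) (hp1 : ∀ i, ∑ z, p i z = 1)
    (hg : ∀ z, |g z| ≤ 1) (hv : v ≠ 0) (hτ : 0 ≤ τ)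
    (hmean : ∑ i, v i * ∑ z, p i z * g z = -(τ * sqrt (∑ i, v i ^ 2))) :
    productTail p (fun i z => v i * g z) ≤ exp (-τ ^ 2 / 2) := by
  set D := sqrt (∑ i, v i ^ 2)
  have hD : 0 < D := sqrt_sum_sq_pos hv
  have hD2 : D ^ 2 = ∑ i, v i ^ 2 := sq_sqrt (sum_nonneg fun i _ => sq_nonneg (v i))
  set t := τ / D
  have he (i : ι) : ∑ z, p i z * exp (t * (v i * g z))
      ≤ exp (t * v i * ∑ z, p i z * g z + (t * v i) ^ 2 / 2) := by
    have := sum_mul_exp_le_exp_of_mem_Icc (hp i) (hp1 i) (fun z => abs_le.1 (hg z)) (t * v i)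
    rw [show ((1 - -1) / 2 : ℝ) ^ 2 = 1 by norm_num, one_mul] at this
    simpa only [mul_assoc] using this
  refine (productTail_le_exp_sum hp _ (div_nonneg hτ hD.le) _ he).trans_eq ?_
  have hsum : ∑ i, (t * v i * ∑ z, p i z * g z + (t * v i) ^ 2 / 2)
      = t * ∑ i, v i * ∑ z, p i z * g z + t ^ 2 / 2 * ∑ i, v i ^ 2 := by
    rw [sum_add_distrib, mul_sum, mul_sum]
    congr 1 <;> exact sum_congr rfl fun i _ => by ring
  rw [hsum, hmean, ← hD2]
  congr 1
  simp only [t]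
  field_simp
  ring

theorem productTail_le_bernstein (hp : ∀ i z, 0 ≤ p i z) (hp1 : ∀ i, ∑ z, p i z = 1)
    (hg : ∀ z, |g z| ≤ 1) {σsq : ℝ} (hσ : 0 < σsq) (hvar : ∀ i, ∑ z, p i z * g z ^ 2 ≤ σsq)
    (hv : v ≠ 0) {c : ℝ} (hc0 : 0 ≤ c) (hc : ∀ i, |v i| ≤ c * sqrt (∑ i, v i ^ 2)) (hτ : 0 ≤ τ)
    (hmean : ∑ i, v i * ∑ z, p i z * g z = -(τ * sqrt (∑ i, v i ^ 2))) :
    productTail p (fun i z => v i * g z) ≤ exp (-τ ^ 2 / (2 * (σsq + c * τ / 3))) := by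
  set D := sqrt (∑ i, v i ^ 2)
  have hD : 0 < D := sqrt_sum_sq_pos hv
  have hD2 : D ^ 2 = ∑ i, v i ^ 2 := sq_sqrt (sum_nonneg fun i _ => sq_nonneg (v i))
  set A := σsq + c * τ / 3
  have hA : 0 < A := by positivity
  set t := τ / (D * A)
  have ht : 0 ≤ t := by positivity
  set u := c * τ / A
  have hu : u < 3 := by rw [div_lt_iff₀ hA]; simp only [A]; linarith
  have hu3 : 1 - u / 3 = σsq / A := by simp only [u, A]; field_simp; ring
  have hK : 0 ≤ 2 * (1 - u / 3) := by rw [hu3]; positivity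
  have he (i : ι) : ∑ z, p i z * exp (t * (v i * g z))
      ≤ exp (t * v i * ∑ z, p i z * g z + (t * v i) ^ 2 * σsq / (2 * (1 - u / 3))) := by
    have hs (z : α) : |t * v i * g z| ≤ u := by
      calc |t * v i * g z| ≤ t * (c * D) * 1 := by
            rw [abs_mul, abs_mul, abs_of_nonneg ht]
            gcongr
            exacts [hc i, hg z]
        _ = u := by simp only [t, u]; field_simp
    have := sum_mul_exp_le_exp_of_abs_le (hp i) (hp1 i) hs hu
    simp only [mul_assoc] at this ⊢
    refine this.trans (exp_le_exp.2 ?_)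
    gcongr
    exact hvar i
  refine (productTail_le_exp_sum hp _ ht _ he).trans_eq ?_
  have hsum : ∑ i, (t * v i * ∑ z, p i z * g z + (t * v i) ^ 2 * σsq / (2 * (1 - u / 3)))
      = t * ∑ i, v i * ∑ z, p i z * g z
        + t ^ 2 * σsq / (2 * (1 - u / 3)) * ∑ i, v i ^ 2 := by
    rw [sum_add_distrib, mul_sum, mul_sum]
    congr 1 <;> exact sum_congr rfl fun i _ => by ring
  rw [hsum, hmean, ← hD2, hu3]
  congr 1
  simp only [t, A]
  field_simp
  ring

end ProductTail

section MeasureBounds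

variable {Ω : Type*} [MeasurableSpace Ω] (μ : Measure Ω)

theorem sum_measureReal_fiber_eq_one [IsProbabilityMeasure μ] {α : Type*} [Fintype α]
    [MeasurableSpace α] [MeasurableSingletonClass α] {X : Ω → α} (hX : Measurable X) :
    ∑ a, μ.real {ω | X ω = a} = 1 := by
  refine (sum_measureReal_preimage_singleton univ fun a _ =>
    hX (measurableSet_singleton a)).trans ?_
  simp

theorem measureReal_and_sum_nonneg_le [IsFiniteMeasure μ] {ι α : Type*} [Fintype ι]
    [DecidableEq ι] [Fintype α] (P : Ω → Prop) (X : ι → Ω → α) (p : ι → α → ℝ) (c : ℝ)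
    (hlaw : ∀ A : ι → α, μ.real {ω | P ω ∧ ∀ i, X i ω = A i} = c * ∏ i, p i (A i))
    (f : ι → α → ℝ) :
    μ.real {ω | P ω ∧ 0 ≤ ∑ i, f i (X i ω)} ≤ c * productTail p f := by
  have hsub : {ω | P ω ∧ 0 ≤ ∑ i, f i (X i ω)}
      ⊆ ⋃ A ∈ univ.filter (fun A : ι → α => 0 ≤ ∑ i, f i (A i)),
          {ω | P ω ∧ ∀ i, X i ω = A i} := fun ω ⟨hP, hf⟩ =>
    Set.mem_biUnion (x := fun i => X i ω) (by simpa using hf) ⟨hP, fun i => rfl⟩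
  calc μ.real {ω | P ω ∧ 0 ≤ ∑ i, f i (X i ω)}
      ≤ ∑ A ∈ univ.filter (fun A : ι → α => 0 ≤ ∑ i, f i (A i)),
          μ.real {ω | P ω ∧ ∀ i, X i ω = A i} :=
        (measureReal_mono hsub (measure_ne_top μ _)).trans (measureReal_biUnion_finset_le _ _)
    _ = c * productTail p f := by simp only [hlaw, productTail, mul_sum]

end MeasureBounds

theorem inv_mul_sum_le_of_forall_le {N : ℕ} (hN : 0 < N) {f : Fin N → ℝ} {B : ℝ}
    (hf : ∀ j, f j ≤ B) : (N : ℝ)⁻¹ * ∑ j, f j ≤ B := by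
  rw [inv_mul_le_iff₀ (by exact_mod_cast hN)]
  simpa using sum_le_sum fun j (_ : j ∈ univ) => hf j

theorem le_inv_mul_sum_of_forall_le {N : ℕ} (hN : 0 < N) {f : Fin N → ℝ} {B : ℝ}
    (hf : ∀ j, B ≤ f j) : B ≤ (N : ℝ)⁻¹ * ∑ j, f j := by
  rw [le_inv_mul_iff₀ (by exact_mod_cast hN)]
  simpa using sum_le_sum fun j (_ : j ∈ univ) => hf j

namespace CrowdHom

variable {M L : ℕ} {q : ℝ} {w v : Fin M → ℝ} {i : Fin M} {k : Fin L}

theorem natCast_sub_one_ne_zero (hL : 2 ≤ L) : (L : ℝ) - 1 ≠ 0 := by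
  have : (2 : ℝ) ≤ L := by exact_mod_cast hL
  linarith

theorem condLaw_zero : condLaw q w i k 0 = 1 - q := by
  simp [condLaw]

theorem condLaw_succ (h : Fin L) :
    condLaw q w i k h.succ = q * if h = k then w i else (1 - w i) / ((L : ℝ) - 1) := by
  simp [condLaw, Fin.succ_ne_zero]

theorem condLaw_nonneg (hq0 : 0 ≤ q) (hq1 : q ≤ 1) (hw0 : 0 ≤ w i) (hw1 : w i ≤ 1)
    (z : Fin (L + 1)) : 0 ≤ condLaw q w i k z := by
  have hL : (1 : ℝ) ≤ L := by exact_mod_cast k.pos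
  unfold condLaw
  split_ifs
  · linarith
  · exact mul_nonneg hq0 hw0
  · exact mul_nonneg hq0 (div_nonneg (by linarith) (by linarith))

theorem sum_condLaw_succ (hL : 2 ≤ L) : ∑ h : Fin L, condLaw q w i k h.succ = q := by
  have hL1 := natCast_sub_one_ne_zero hL
  simp only [condLaw_succ, ← mul_sum]
  rw [← add_sum_erase _ _ (mem_univ k), if_pos rfl,
    sum_congr rfl fun h hh => if_neg (ne_of_mem_erase hh), sum_const,
    card_erase_of_mem (mem_univ k), card_univ, Fintype.card_fin, nsmul_eq_mul,
    Nat.cast_sub (by omega), Nat.cast_one]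
  field_simp
  ring

theorem sum_condLaw (hL : 2 ≤ L) : ∑ z, condLaw q w i k z = 1 := by
  rw [Fin.sum_univ_succ, condLaw_zero, sum_condLaw_succ hL]
  ring

def voteGap (h k : Fin L) (z : Fin (L + 1)) : ℝ :=
  (if z = h.succ then 1 else 0) - if z = k.succ then 1 else 0

theorem abs_voteGap_le (h k : Fin L) (z : Fin (L + 1)) : |voteGap h k z| ≤ 1 := by
  unfold voteGap
  split_ifs <;> norm_num

theorem voteGap_zero (h k : Fin L) : voteGap h k 0 = 0 := by
  simp [voteGap, (Fin.succ_ne_zero _).symm]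

theorem voteGap_swap (h k : Fin L) (z : Fin (L + 1)) : voteGap k h z = -voteGap h k z := by
  simp only [voteGap, neg_sub]

theorem sum_mul_voteGap (v : Fin M → ℝ) (z : Fin M → Fin (L + 1)) (h k : Fin L) :
    ∑ i, v i * voteGap h k (z i)
      = (∑ i, v i * if z i = h.succ then 1 else 0) - ∑ i, v i * if z i = k.succ then 1 else 0 := by
  simp only [voteGap, mul_sub, sum_sub_distrib]

theorem sum_condLaw_mul_voteGap {h : Fin L} (hhk : h ≠ k) :
    ∑ z, condLaw q w i k z * voteGap h k z = -(q * (L * w i - 1) / (L - 1)) := by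
  have hL1 := natCast_sub_one_ne_zero (Fin.nontrivial_iff_two_le.1 ⟨⟨h, k, hhk⟩⟩)
  simp only [voteGap, mul_sub, sum_sub_distrib, mul_ite, mul_one, mul_zero, sum_ite_eq',
    mem_univ, if_true, condLaw_succ, if_neg hhk]
  field_simp
  ring

theorem sum_condLaw_mul_sq_le (hq0 : 0 ≤ q) (hq1 : q ≤ 1) (hw0 : 0 ≤ w i) (hw1 : w i ≤ 1)
    (hL : 2 ≤ L) {g : Fin (L + 1) → ℝ} (hg : ∀ z, |g z| ≤ 1) (hg0 : g 0 = 0) :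
    ∑ z, condLaw q w i k z * g z ^ 2 ≤ q := by
  calc ∑ z, condLaw q w i k z * g z ^ 2 = ∑ h : Fin L, condLaw q w i k h.succ * g h.succ ^ 2 := by
        simp [Fin.sum_univ_succ, hg0]
    _ ≤ ∑ h : Fin L, condLaw q w i k h.succ :=
        sum_le_sum fun h _ => mul_le_of_le_one_right (condLaw_nonneg hq0 hq1 hw0 hw1 _)
          ((sq_le_one_iff_abs_le_one _).2 (hg _))
    _ = q := sum_condLaw_succ hL

theorem cConst_nonneg (v : Fin M → ℝ) : 0 ≤ cConst v :=
  div_nonneg (Real.sSup_nonneg fun _ ⟨_, hx⟩ => hx ▸ abs_nonneg _) (Real.sqrt_nonneg _)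

theorem abs_le_cConst_mul {v : Fin M → ℝ} (hv : v ≠ 0) (i : Fin M) :
    |v i| ≤ cConst v * Real.sqrt (∑ i, v i ^ 2) := by
  rw [cConst, div_mul_cancel₀ _ (sqrt_sum_sq_pos hv).ne']
  have hrange : {x : ℝ | ∃ i : Fin M, x = |v i|} = Set.range fun i => |v i| := by
    ext; simp [eq_comm]
  exact le_csSup (hrange ▸ (Set.finite_range _).bddAbove) ⟨i, rfl⟩

theorem sum_mul_sum_condLaw_mul_voteGap (hv : v ≠ 0) {h : Fin L} (hhk : h ≠ k) :
    ∑ i, v i * ∑ z, condLaw q w i k z * voteGap h k z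
      = -(tWMV L q w v * Real.sqrt (∑ i, v i ^ 2)) := by
  have hL1 := natCast_sub_one_ne_zero (Fin.nontrivial_iff_two_le.1 ⟨⟨h, k, hhk⟩⟩)
  have hsum : ∑ i, v i * (q * (L * w i - 1) / (L - 1))
      = q / (L - 1) * ∑ i, v i * (L * w i - 1) := by
    rw [mul_sum]
    exact sum_congr rfl fun i _ => by ring
  simp only [sum_condLaw_mul_voteGap hhk, mul_neg, sum_neg_distrib, hsum, tWMV]
  field_simp [(sqrt_sum_sq_pos hv).ne']

section Votes

variable {Ω : Type*} [MeasurableSpace Ω] (μ : Measure Ω)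

theorem measureReal_and_sum_mul_le_min [IsFiniteMeasure μ] (y : Ω → Fin L)
    (Z : Fin M → Ω → Fin (L + 1)) {pk : ℝ}
    (hlaw : ∀ A : Fin M → Fin (L + 1),
      μ.real {ω | y ω = k ∧ ∀ i, Z i ω = A i} = pk * ∏ i, condLaw q w i k (A i))
    (hpk : 0 ≤ pk) (hL : 2 ≤ L) (hq0 : 0 < q) (hq1 : q ≤ 1) (hw0 : ∀ i, 0 ≤ w i)
    (hw1 : ∀ i, w i ≤ 1) (hv : v ≠ 0) {g : Fin (L + 1) → ℝ} (hg : ∀ z, |g z| ≤ 1)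
    (hg0 : g 0 = 0) {τ : ℝ} (hτ : 0 ≤ τ)
    (hmean : ∑ i, v i * ∑ z, condLaw q w i k z * g z = -(τ * Real.sqrt (∑ i, v i ^ 2))) :
    μ.real {ω | y ω = k ∧ 0 ≤ ∑ i, v i * g (Z i ω)}
      ≤ pk * min (exp (-τ ^ 2 / 2)) (exp (-τ ^ 2 / (2 * (q + cConst v * τ / 3)))) := by
  have hp (i : Fin M) := condLaw_nonneg (k := k) hq0.le hq1 (hw0 i) (hw1 i)
  have hp1 (i : Fin M) := sum_condLaw (q := q) (w := w) (i := i) (k := k) hL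
  have hvar (i : Fin M) := sum_condLaw_mul_sq_le (k := k) hq0.le hq1 (hw0 i) (hw1 i) hL hg hg0
  refine (measureReal_and_sum_nonneg_le μ (y · = k) Z _ pk hlaw fun i z => v i * g z).trans
    (mul_le_mul_of_nonneg_left (le_min ?_ ?_) hpk)
  · exact productTail_le_hoeffding hp hp1 hg hv hτ hmean
  · exact productTail_le_bernstein hp hp1 hg hq0 hvar hv (cConst_nonneg v)
      (abs_le_cConst_mul hv) hτ hmean

variable {y yhat : Ω → Fin L} {Z : Fin M → Ω → Fin (L + 1)} {pri : Fin L → ℝ} {B : ℝ}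

theorem measureReal_ne_le [IsFiniteMeasure μ]
    (hyhat : ∀ ω (k : Fin L), (∑ i, v i * if Z i ω = k.succ then (1 : ℝ) else 0)
      ≤ ∑ i, v i * if Z i ω = (yhat ω).succ then (1 : ℝ) else 0)
    (hpri : ∑ k, pri k = 1)
    (hB : ∀ k h, h ≠ k →
      μ.real {ω | y ω = k ∧ 0 ≤ ∑ i, v i * voteGap h k (Z i ω)} ≤ pri k * B) :
    μ.real {ω | yhat ω ≠ y ω} ≤ (L - 1) * B := by
  have hL : 1 ≤ L := Nat.pos_of_ne_zero fun hL => by subst hL; simp at hpri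
  have hsub : {ω | yhat ω ≠ y ω} ⊆ ⋃ k, ⋃ h ∈ univ.erase k,
      {ω | y ω = k ∧ 0 ≤ ∑ i, v i * voteGap h k (Z i ω)} := by
    intro ω hω
    simp only [Set.mem_iUnion]
    exact ⟨y ω, yhat ω, mem_erase.2 ⟨hω, mem_univ _⟩, rfl,
      by rw [sum_mul_voteGap]; exact sub_nonneg.2 (hyhat ω (y ω))⟩
  calc μ.real {ω | yhat ω ≠ y ω}
      ≤ ∑ k, ∑ h ∈ univ.erase k, μ.real {ω | y ω = k ∧ 0 ≤ ∑ i, v i * voteGap h k (Z i ω)} :=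
        (measureReal_mono hsub (measure_ne_top _ _)).trans ((measureReal_iUnion_fintype_le _).trans
          (sum_le_sum fun k _ => measureReal_biUnion_finset_le _ _))
    _ ≤ ∑ k, ∑ h ∈ univ.erase k, pri k * B :=
        sum_le_sum fun k _ => sum_le_sum fun h hh => hB k h (ne_of_mem_erase hh)
    _ = (L - 1) * B := by
        simp [card_erase_of_mem, Nat.cast_sub hL, ← mul_sum, ← sum_mul, hpri]

theorem one_sub_le_measureReal_ne [IsProbabilityMeasure μ]
    (hyhat : ∀ ω (k : Fin L), (∑ i, v i * if Z i ω = k.succ then (1 : ℝ) else 0)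
      ≤ ∑ i, v i * if Z i ω = (yhat ω).succ then (1 : ℝ) else 0)
    (hpri : ∑ k, pri k = 1)
    (hB : ∀ k, ∃ h,
      μ.real {ω | y ω = k ∧ 0 ≤ ∑ i, v i * voteGap k h (Z i ω)} ≤ pri k * B) :
    1 - B ≤ μ.real {ω | yhat ω ≠ y ω} := by
  choose h hh using hB
  have hsub : {ω | yhat ω = y ω}
      ⊆ ⋃ k, {ω | y ω = k ∧ 0 ≤ ∑ i, v i * voteGap k (h k) (Z i ω)} := by
    intro ω hω
    refine Set.mem_iUnion.2 ⟨y ω, rfl, ?_⟩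
    rw [sum_mul_voteGap, ← show yhat ω = y ω from hω]
    exact sub_nonneg.2 (hyhat ω _)
  have hcorrect : μ.real {ω | yhat ω = y ω} ≤ B := calc
    _ ≤ ∑ k, μ.real {ω | y ω = k ∧ 0 ≤ ∑ i, v i * voteGap k (h k) (Z i ω)} :=
        (measureReal_mono hsub (measure_ne_top _ _)).trans (measureReal_iUnion_fintype_le _)
    _ ≤ ∑ k, pri k * B := sum_le_sum fun k _ => hh k
    _ = B := by rw [← sum_mul, hpri, one_mul]
  have hcover : 1 ≤ μ.real {ω | yhat ω = y ω} + μ.real {ω | yhat ω ≠ y ω} := calc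
    (1 : ℝ) = μ.real ({ω | yhat ω = y ω} ∪ {ω | yhat ω = y ω}ᶜ) := by
        rw [Set.union_compl_self, probReal_univ]
    _ ≤ _ := measureReal_union_le _ _
  linarith

end Votes

end CrowdHom

theorem wmv_mean_error_rate_bounds_general
    {Ω : Type*} [MeasurableSpace Ω] (μ : Measure Ω) [IsProbabilityMeasure μ]
    {M N L : ℕ} (hN : 0 < N) (hL : 2 ≤ L)
    (y : Fin N → Ω → Fin L) (Z : Fin M → Fin N → Ω → Fin (L + 1))
    (hym : ∀ j, Measurable (y j))
    (pri : Fin L → ℝ) (q : ℝ) (w : Fin M → ℝ)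
    (hq0 : 0 < q) (hq1 : q ≤ 1)
    (hw0 : ∀ i, 0 ≤ w i) (hw1 : ∀ i, w i ≤ 1)
    (hprior : ∀ (j : Fin N) (k : Fin L), (μ {ω | y j ω = k}).toReal = pri k)
    (hlaw : ∀ (j : Fin N) (k : Fin L) (h : Fin M → Fin (L + 1)),
      (μ {ω | y j ω = k ∧ ∀ i, Z i j ω = h i}).toReal
        = pri k * ∏ i, CrowdHom.condLaw q w i k (h i))
    (v : Fin M → ℝ) (hv : v ≠ 0)
    (yhat : Fin N → Ω → Fin L)
    (hyhat : ∀ (j : Fin N) (ω : Ω) (k : Fin L),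
      (∑ i, v i * (if Z i j ω = k.succ then (1 : ℝ) else 0))
        ≤ ∑ i, v i * (if Z i j ω = (yhat j ω).succ then (1 : ℝ) else 0)) :
    (0 ≤ CrowdHom.tWMV L q w v →
      (N : ℝ)⁻¹ * ∑ j, (μ {ω | yhat j ω ≠ y j ω}).toReal
        ≤ ((L : ℝ) - 1) * min
            (Real.exp (-(CrowdHom.tWMV L q w v) ^ 2 / 2))
            (Real.exp (-(CrowdHom.tWMV L q w v) ^ 2 /
              (2 * (q + CrowdHom.cConst v * CrowdHom.tWMV L q w v / 3)))))
    ∧ (CrowdHom.tWMV L q w v ≤ 0 →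
      1 - min
          (Real.exp (-(CrowdHom.tWMV L q w v) ^ 2 / 2))
          (Real.exp (-(CrowdHom.tWMV L q w v) ^ 2 /
            (2 * (q - CrowdHom.cConst v * CrowdHom.tWMV L q w v / 3))))
        ≤ (N : ℝ)⁻¹ * ∑ j, (μ {ω | yhat j ω ≠ y j ω}).toReal) := by
  have hpri (k : Fin L) : 0 ≤ pri k := hprior ⟨0, hN⟩ k ▸ ENNReal.toReal_nonneg
  have hpri1 : ∑ k, pri k = 1 :=
    (sum_congr rfl fun k _ => (hprior ⟨0, hN⟩ k).symm).trans
      (sum_measureReal_fiber_eq_one μ (hym ⟨0, hN⟩))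
  have htail (j : Fin N) (k : Fin L) {g : Fin (L + 1) → ℝ} {τ : ℝ} :=
    CrowdHom.measureReal_and_sum_mul_le_min (g := g) (τ := τ) μ (y j) (fun i => Z i j)
      (hlaw j k) (hpri k) hL hq0 hq1 hw0 hw1 hv
  refine ⟨fun ht => inv_mul_sum_le_of_forall_le hN fun j => ?_,
    fun ht => le_inv_mul_sum_of_forall_le hN fun j => ?_⟩
  · refine CrowdHom.measureReal_ne_le μ (hyhat j) hpri1 fun k h hhk => ?_
    exact htail j k (CrowdHom.abs_voteGap_le h k) (CrowdHom.voteGap_zero h k) ht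
      (CrowdHom.sum_mul_sum_condLaw_mul_voteGap hv hhk)
  · refine CrowdHom.one_sub_le_measureReal_ne μ (hyhat j) hpri1 fun k => ?_
    have : Nontrivial (Fin L) := Fin.nontrivial_iff_two_le.2 hL
    obtain ⟨h, hhk⟩ := exists_ne k
    have hbound := htail j k (CrowdHom.abs_voteGap_le k h) (CrowdHom.voteGap_zero k h)
      (neg_nonneg.2 ht) (by
        simp only [CrowdHom.voteGap_swap h k, mul_neg, sum_neg_distrib,
          CrowdHom.sum_mul_sum_condLaw_mul_voteGap hv hhk, neg_mul, neg_neg])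
    exact ⟨h, by simpa only [neg_sq, mul_neg, neg_div, ← sub_eq_add_neg] using hbound⟩

/-- Under the homogeneous Dawid–Skene model with constant assignment
probability `q` and weighted majority voting with weights `v`: with
`t = (q/((L−1)‖v‖₂))·Σ_i v_i(L w_i − 1)`, `c = ‖v‖_∞/‖v‖₂` and `σ² = q`:
(1) if `t ≥ 0` then `E[E_N] ≤ (L−1)·min{exp(−t²/2), exp(−t²/(2(σ² + c t/3)))}`;
(2) if `t ≤ 0` then `E[E_N] ≥ 1 − min{exp(−t²/2), exp(−t²/(2(σ² − c t/3)))}`. -/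
theorem wmv_mean_error_rate_bounds
    {Ω : Type*} [MeasurableSpace Ω] (μ : Measure Ω) [IsProbabilityMeasure μ]
    {M N L : ℕ} (hM : 0 < M) (hN : 0 < N) (hL : 2 ≤ L)
    (y : Fin N → Ω → Fin L) (Z : Fin M → Fin N → Ω → Fin (L + 1))
    (hym : ∀ j, Measurable (y j)) (hZm : ∀ i j, Measurable (Z i j))
    (pri : Fin L → ℝ) (q : ℝ) (w : Fin M → ℝ)
    (hpri : ∀ k, 0 ≤ pri k) (hq0 : 0 < q) (hq1 : q ≤ 1)
    (hw0 : ∀ i, 0 ≤ w i) (hw1 : ∀ i, w i ≤ 1)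
    (hprior : ∀ (j : Fin N) (k : Fin L), (μ {ω | y j ω = k}).toReal = pri k)
    (hlaw : ∀ (j : Fin N) (k : Fin L) (h : Fin M → Fin (L + 1)),
      (μ {ω | y j ω = k ∧ ∀ i, Z i j ω = h i}).toReal
        = pri k * ∏ i, CrowdHom.condLaw q w i k (h i))
    (hindep : iIndepFun (fun j ω => (y j ω, fun i => Z i j ω)) μ)
    (v : Fin M → ℝ) (hv : v ≠ 0)
    (yhat : Fin N → Ω → Fin L) (hyhatm : ∀ j, Measurable (yhat j))
    (hyhat : ∀ (j : Fin N) (ω : Ω) (k : Fin L),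
      (∑ i, v i * (if Z i j ω = k.succ then (1 : ℝ) else 0))
        ≤ ∑ i, v i * (if Z i j ω = (yhat j ω).succ then (1 : ℝ) else 0)) :
    (0 ≤ CrowdHom.tWMV L q w v →
      (N : ℝ)⁻¹ * ∑ j, (μ {ω | yhat j ω ≠ y j ω}).toReal
        ≤ ((L : ℝ) - 1) * min
            (Real.exp (-(CrowdHom.tWMV L q w v) ^ 2 / 2))
            (Real.exp (-(CrowdHom.tWMV L q w v) ^ 2 /
              (2 * (q + CrowdHom.cConst v * CrowdHom.tWMV L q w v / 3)))))
    ∧ (CrowdHom.tWMV L q w v ≤ 0 →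
      1 - min
          (Real.exp (-(CrowdHom.tWMV L q w v) ^ 2 / 2))
          (Real.exp (-(CrowdHom.tWMV L q w v) ^ 2 /
            (2 * (q - CrowdHom.cConst v * CrowdHom.tWMV L q w v / 3))))
        ≤ (N : ℝ)⁻¹ * ∑ j, (μ {ω | yhat j ω ≠ y j ω}).toReal) :=
  wmv_mean_error_rate_bounds_general μ hN hL y Z hym pri q w hq0 hq1 hw0 hw1 hprior hlaw v hv yhat
    hyhat
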